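/- Assume G is bipartite and let ℋ = (𝒰, ℱ, 𝒰*) be a history graph for (o,T) for the j-threshold Consensus Process. Then, as an inequality of real numbers, 2·(Φ_E(G) − j + 1)·|𝒰| + δ − Φ_E(G) ≤ (Φ_E(G) + Δ − 2j + 2)·|𝒰*|. -/

import Mathlib

open Classical
noncomputable section

namespace Paper

variable {V : Type*}

/-- Number of neighbours of `x` whose value is `1` (`true`). -/
def cCount (G : SimpleGraph V) [DecidableRel G.Adj] [∀ v, Fintype (G.neighborSet v)]
    (η : V → Bool) (x : V) : ℕ :=
  ((G.neighborFinset x).filter fun y => η y = true).card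

/-- The `j`-neighbour Bootstrap Percolation with noise set `N` and initial configuration `ξ`. -/
noncomputable def bootstrapPerc (G : SimpleGraph V) [DecidableRel G.Adj]
    [∀ v, Fintype (G.neighborSet v)] (j : ℕ) (N : Set (V × ℕ)) (ξ : V → Bool) :
    ℕ → V → Bool
  | 0 => ξ
  | t + 1 => fun x =>
      if (x, t + 1) ∈ N then false
      else bootstrapPerc G j N ξ t x || decide (j ≤ cCount G (bootstrapPerc G j N ξ t) x)

/-- The `j`-threshold Consensus Process with noise set `N` and initial configuration `ξ`. -/
noncomputable def consensus (G : SimpleGraph V) [DecidableRel G.Adj]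
    [∀ v, Fintype (G.neighborSet v)] (j : ℕ) (N : Set (V × ℕ)) (ξ : V → Bool) :
    ℕ → V → Bool
  | 0 => ξ
  | t + 1 => fun x =>
      if (x, t + 1) ∈ N then false
      else decide (j ≤ cCount G (consensus G j N ξ t) x)

/-- `∂_E K`: number of edges with exactly one endpoint in `K`. -/
def edgeBoundaryCard (G : SimpleGraph V) [DecidableRel G.Adj]
    [∀ v, Fintype (G.neighborSet v)] (K : Finset V) : ℕ :=
  ∑ x ∈ K, ((G.neighborFinset x).filter fun y => y ∉ K).card

/-- The edge expansion constant `Φ_E(G)`. -/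
noncomputable def edgeExpansion (G : SimpleGraph V) [DecidableRel G.Adj]
    [∀ v, Fintype (G.neighborSet v)] : ℝ :=
  sInf {r : ℝ | ∃ K : Finset V, K.Nonempty ∧ r = (edgeBoundaryCard G K : ℝ) / (K.card : ℝ)}

/-- `∂_V K`: number of vertices outside `K` adjacent to a vertex of `K`. -/
def vertexBoundaryCard [DecidableEq V] (G : SimpleGraph V) [DecidableRel G.Adj]
    [∀ v, Fintype (G.neighborSet v)] (K : Finset V) : ℕ :=
  ((K.biUnion fun x => G.neighborFinset x) \ K).card

/-- The vertex expansion constant `Φ_V(G)`. -/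
noncomputable def vertexExpansion [DecidableEq V] (G : SimpleGraph V) [DecidableRel G.Adj]
    [∀ v, Fintype (G.neighborSet v)] : ℝ :=
  sInf {r : ℝ | ∃ K : Finset V, K.Nonempty ∧ r = (vertexBoundaryCard G K : ℝ) / (K.card : ℝ)}

/-- A history graph `(𝒰, ℱ, 𝒰*)` for `(o, T)`.  If `bp = true` it is a history graph for the
`j`-neighbour Bootstrap Percolation (one outgoing straight edge and `deg x − j + 1` outgoing
oblique edges at every vertex of `𝒰 \ 𝒰*`); if `bp = false` it is a history graph for the
`j`-threshold Consensus Process (no straight edges and `deg x − j + 1` outgoing oblique edges). -/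
structure HistoryGraph (G : SimpleGraph V) [DecidableRel G.Adj]
    [∀ v, Fintype (G.neighborSet v)] (j : ℕ) (o : V) (T : ℕ) (bp : Bool) where
  U : Finset (V × ℕ)
  F : Finset ((V × ℕ) × (V × ℕ))
  Ustar : Finset (V × ℕ)
  ustar_subset : Ustar ⊆ U
  edge_mem_fst : ∀ e ∈ F, e.1 ∈ U
  edge_mem_snd : ∀ e ∈ F, e.2 ∈ U
  edge_time : ∀ e ∈ F, e.1.2 = e.2.2 + 1
  edge_space : ∀ e ∈ F, e.1.1 = e.2.1 ∨ G.Adj e.1.1 e.2.1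
  conn : ∀ u ∈ U, ∀ v ∈ U,
    Relation.ReflTransGen (fun a b => (a, b) ∈ F ∨ (b, a) ∈ F) u v
  root_mem : (o, T) ∈ U
  time_range : ∀ u ∈ U, u ≠ (o, T) → 1 ≤ u.2 ∧ u.2 ≤ T
  time_one_star : ∀ u ∈ U, u.2 = 1 → u ∈ Ustar
  star_no_out : ∀ u ∈ Ustar, ∀ e ∈ F, e.1 ≠ u
  straight_count : ∀ u ∈ U, u ∉ Ustar →
      (F.filter fun e => e.1 = u ∧ e.2.1 = u.1).card = cond bp 1 0
  oblique_count : ∀ u ∈ U, u ∉ Ustar →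
      (F.filter fun e => e.1 = u ∧ e.2.1 ≠ u.1).card = G.degree u.1 + 1 - j

/-- The strong product `G ⊠ ℕ`. -/
def strongProd (G : SimpleGraph V) : SimpleGraph (V × ℕ) where
  Adj p q := p ≠ q ∧ (p.2 ≤ q.2 + 1 ∧ q.2 ≤ p.2 + 1) ∧ (p.1 = q.1 ∨ G.Adj p.1 q.1)
  symm := ⟨by
    rintro p q ⟨h1, ⟨h2, h3⟩, h4⟩
    exact ⟨h1.symm, ⟨h3, h2⟩, h4.elim (fun e => Or.inl e.symm) fun a => Or.inr a.symm⟩⟩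
  loopless := ⟨fun p h => h.1 rfl⟩

/-- The connected component of `p` in the subgraph of `G ⊠ ℕ` induced by `Z`. -/
def cluster (G : SimpleGraph V) (Z : Set (V × ℕ)) (p : V × ℕ) : Set (V × ℕ) :=
  {q | p ∈ Z ∧ q ∈ Z ∧
    Relation.ReflTransGen (fun a b => a ∈ Z ∧ b ∈ Z ∧ (strongProd G).Adj a b) p q}

/-- The witness-root property defining `j ≤ j̄`. -/
def radialGood (G : SimpleGraph V) [DecidableRel G.Adj] [∀ v, Fintype (G.neighborSet v)]
    (j : ℕ) : Prop :=
  ∃ r : V, ∀ x : V,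
    j ≤ ((G.neighborFinset x).filter fun y => G.dist r y = G.dist r x + 1).card

end Paper

/-!
Every edge of a history graph of the Consensus Process is oblique, so for a proper
`2`-colouring `c` of `G` the parity of `c x + t` is constant on `𝒰`. Hence the slice `A_t` of
`𝒰` at time `t` and the slice `B_{t+1}` of `𝒰 \ 𝒰*` at time `t + 1` are disjoint, and every
`x ∈ B_{t+1}` has at least `deg x - j + 1` neighbours in `A_t`. The edge-isoperimetric
inequality for `A_t ∪ B_{t+1}` then reads
`Φ (|A_t| + |B_{t+1}|) ≤ Σ_{A_t} deg + Σ_{B_{t+1}} deg - 2 Σ_{B_{t+1}} (deg - j + 1)`.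
Summing over `t < T`, the degrees on `𝒰*` are bounded by `Δ`, and the slice at time `T`,
which contains the root, contributes at most `Φ - δ`.
-/

namespace Paper

variable {V : Type*}

lemma two_mul_sum_card_adj_le (G : SimpleGraph V) [DecidableRel G.Adj] {A B : Finset V}
    (hAB : Disjoint A B) :
    2 * ∑ x ∈ B, (A.filter (G.Adj x)).card ≤
      ∑ x ∈ A ∪ B, ((A ∪ B).filter (G.Adj x)).card := by
  have hsymm : ∑ x ∈ B, (A.filter (G.Adj x)).card = ∑ x ∈ A, (B.filter (G.Adj x)).card := by
    simpa [Finset.bipartiteAbove, Finset.bipartiteBelow, G.adj_comm] using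
      (Finset.sum_card_bipartiteAbove_eq_sum_card_bipartiteBelow G.Adj (s := A) (t := B)).symm
  rw [Finset.sum_union hAB, two_mul]
  nth_rewrite 1 [hsymm]
  gcongr
  exacts [Finset.subset_union_right, Finset.subset_union_left]

section EdgeExpansion

variable (G : SimpleGraph V) [DecidableRel G.Adj] [∀ v, Fintype (G.neighborSet v)]

lemma edgeExpansion_mul_card_le (K : Finset V) :
    edgeExpansion G * K.card ≤ edgeBoundaryCard G K := by
  rcases K.eq_empty_or_nonempty with rfl | hK
  · simp [edgeBoundaryCard]
  have hbdd : BddBelow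
      {r : ℝ | ∃ K : Finset V, K.Nonempty ∧ r = (edgeBoundaryCard G K : ℝ) / K.card} :=
    ⟨0, by rintro r ⟨K, -, rfl⟩; positivity⟩
  have hcard : (0 : ℝ) < K.card := by exact_mod_cast hK.card_pos
  calc edgeExpansion G * K.card ≤ (edgeBoundaryCard G K : ℝ) / K.card * K.card := by
        gcongr; exact csInf_le hbdd ⟨K, hK, rfl⟩
    _ = edgeBoundaryCard G K := div_mul_cancel₀ _ hcard.ne'

lemma edgeBoundaryCard_singleton (x : V) : edgeBoundaryCard G {x} = G.degree x := by
  rw [edgeBoundaryCard, Finset.sum_singleton, ← G.card_neighborFinset_eq_degree,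
    Finset.filter_true_of_mem]
  intro y hy
  simpa [eq_comm] using G.ne_of_adj ((G.mem_neighborFinset x y).1 hy)

lemma edgeExpansion_le_degree (x : V) : edgeExpansion G ≤ G.degree x := by
  simpa [edgeBoundaryCard_singleton] using edgeExpansion_mul_card_le G {x}

lemma edgeBoundaryCard_add_sum_card_adj (K : Finset V) :
    edgeBoundaryCard G K + ∑ x ∈ K, (K.filter (G.Adj x)).card = ∑ x ∈ K, G.degree x := by
  rw [edgeBoundaryCard, ← Finset.sum_add_distrib]
  refine Finset.sum_congr rfl fun x _ => ?_
  have hK : K.filter (G.Adj x) = (G.neighborFinset x).filter (· ∈ K) := by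
    ext y; simp [and_comm]
  rw [hK, add_comm, Finset.card_filter_add_card_filter_not, G.card_neighborFinset_eq_degree]

lemma edgeExpansion_mul_card_add_le {A B : Finset V} (hAB : Disjoint A B) :
    edgeExpansion G * (A.card + B.card) + 2 * ∑ x ∈ B, ((A.filter (G.Adj x)).card : ℝ) ≤
      ∑ x ∈ A, (G.degree x : ℝ) + ∑ x ∈ B, (G.degree x : ℝ) := by
  have hK := edgeExpansion_mul_card_le G (A ∪ B)
  have hcount : edgeBoundaryCard G (A ∪ B) + 2 * ∑ x ∈ B, (A.filter (G.Adj x)).card ≤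
      ∑ x ∈ A, G.degree x + ∑ x ∈ B, G.degree x := by
    rw [← Finset.sum_union hAB, ← edgeBoundaryCard_add_sum_card_adj]
    exact Nat.add_le_add_left (two_mul_sum_card_adj_le G hAB) _
  rw [Finset.card_union_of_disjoint hAB] at hK
  push_cast at hK
  have hcount' : (edgeBoundaryCard G (A ∪ B) : ℝ) +
      2 * ∑ x ∈ B, ((A.filter (G.Adj x)).card : ℝ) ≤
        ∑ x ∈ A, (G.degree x : ℝ) + ∑ x ∈ B, (G.degree x : ℝ) := by
    exact_mod_cast hcount
  linarith

end EdgeExpansion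

section Slice

def slice (S : Finset (V × ℕ)) (t : ℕ) : Finset V :=
  (S.filter (·.2 = t)).image Prod.fst

@[simp]
lemma mem_slice {S : Finset (V × ℕ)} {t : ℕ} {x : V} : x ∈ slice S t ↔ (x, t) ∈ S := by
  simp [slice]

lemma slice_mono {S S' : Finset (V × ℕ)} (h : S ⊆ S') (t : ℕ) : slice S t ⊆ slice S' t :=
  fun _ hx => mem_slice.2 (h (mem_slice.1 hx))

lemma sum_slice {M : Type*} [AddCommMonoid M] (S : Finset (V × ℕ)) (t : ℕ) (f : V → M) :
    ∑ x ∈ slice S t, f x = ∑ u ∈ S with u.2 = t, f u.1 := by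
  refine Finset.sum_image fun u hu v hv h => Prod.ext h ?_
  simp only [Finset.coe_filter, Set.mem_ofPred_eq] at hu hv
  rw [hu.2, hv.2]

lemma sum_sum_slice {M : Type*} [AddCommMonoid M] (S : Finset (V × ℕ)) (I : Finset ℕ)
    (f : V → M) : ∑ t ∈ I, ∑ x ∈ slice S t, f x = ∑ u ∈ S with u.2 ∈ I, f u.1 := by
  simp only [sum_slice]
  exact Finset.sum_fiberwise_eq_sum_filter S I Prod.snd fun u => f u.1

end Slice

namespace HistoryGraph

variable {G : SimpleGraph V} [DecidableRel G.Adj] [∀ v, Fintype (G.neighborSet v)]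
  {j : ℕ} {o : V} {T : ℕ}

lemma snd_le {bp : Bool} (H : HistoryGraph G j o T bp) {u : V × ℕ} (hu : u ∈ H.U) :
    u.2 ≤ T := by
  by_cases h : u = (o, T)
  · rw [h]
  · exact (H.time_range u hu h).2

lemma one_le_snd {bp : Bool} (H : HistoryGraph G j o T bp) {u : V × ℕ}
    (hu : u ∈ H.U \ H.Ustar) (hj : j ≤ G.degree u.1) : 1 ≤ u.2 := by
  obtain ⟨huU, hu⟩ := Finset.mem_sdiff.1 hu
  have hpos : 0 < (H.F.filter fun e => e.1 = u ∧ e.2.1 ≠ u.1).card := by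
    rw [H.oblique_count u huU hu]; omega
  obtain ⟨e, he⟩ := Finset.card_pos.1 hpos
  rw [Finset.mem_filter] at he
  have htime := H.edge_time e he.1
  rw [he.2.1] at htime
  omega

lemma degree_add_one_le {bp : Bool} (H : HistoryGraph G j o T bp) {x : V} {t : ℕ}
    (hx : (x, t + 1) ∈ H.U \ H.Ustar) :
    G.degree x + 1 ≤ ((slice H.U t).filter (G.Adj x)).card + j := by
  obtain ⟨hxU, hx⟩ := Finset.mem_sdiff.1 hx
  have hcount := H.oblique_count _ hxU hx
  simp only at hcount
  suffices (H.F.filter fun e => e.1 = (x, t + 1) ∧ e.2.1 ≠ x).card ≤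
      ((slice H.U t).filter (G.Adj x)).card by omega
  have hsnd : ∀ e ∈ H.F, e.1 = (x, t + 1) → e.2 = (e.2.1, t) := fun e he h1 => by
    have htime := H.edge_time e he
    rw [h1] at htime
    exact Prod.ext rfl (by simp only at htime ⊢; omega)
  refine Finset.card_le_card_of_injOn (fun e => e.2.1) (fun e he => ?_) (fun e he e' he' h => ?_)
  · simp only [Finset.coe_filter, Set.mem_ofPred_eq] at he
    obtain ⟨heF, h1, hne⟩ := he
    have hadj := (H.edge_space e heF).resolve_left (by rw [h1]; exact hne.symm)
    rw [h1] at hadj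
    simpa [← hsnd e heF h1, H.edge_mem_snd e heF] using hadj
  · simp only [Finset.coe_filter, Set.mem_ofPred_eq] at he he'
    exact Prod.ext (he.2.1.trans he'.2.1.symm)
      ((hsnd e he.1 he.2.1).trans
        ((congrArg (·, t) h).trans (hsnd e' he'.1 he'.2.1).symm))

lemma adj_of_mem_F (H : HistoryGraph G j o T false) {e : (V × ℕ) × (V × ℕ)}
    (he : e ∈ H.F) :
    G.Adj e.1.1 e.2.1 := by
  have hout : e.1 ∉ H.Ustar := fun h => H.star_no_out _ h e he rfl
  have hstraight := H.straight_count _ (H.edge_mem_fst e he) hout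
  refine (H.edge_space e he).resolve_left fun heq => ?_
  have hmem : e ∈ H.F.filter fun e' => e'.1 = e.1 ∧ e'.2.1 = e.1.1 :=
    Finset.mem_filter.2 ⟨he, rfl, heq.symm⟩
  simp [Finset.card_eq_zero.1 hstraight] at hmem

lemma parity_eq (H : HistoryGraph G j o T false) (C : G.Coloring (Fin 2)) {u v : V × ℕ}
    (hu : u ∈ H.U) (hv : v ∈ H.U) : ((C u.1 : ℕ) + u.2) % 2 = ((C v.1 : ℕ) + v.2) % 2 := by
  have hedge : ∀ e ∈ H.F, ((C e.1.1 : ℕ) + e.1.2) % 2 = ((C e.2.1 : ℕ) + e.2.2) % 2 := by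
    intro e he
    have hne : (C e.1.1 : ℕ) ≠ C e.2.1 := Fin.val_ne_of_ne (C.valid (H.adj_of_mem_F he))
    have htime := H.edge_time e he
    omega
  have hconn := H.conn u hu v hv
  clear hv
  induction hconn with
  | refl => rfl
  | tail _ hab ih =>
    exact hab.elim (fun h => ih.trans (hedge _ h)) fun h => ih.trans (hedge _ h).symm

lemma disjoint_slice_slice_succ (H : HistoryGraph G j o T false) (C : G.Coloring (Fin 2))
    (t : ℕ) : Disjoint (slice H.U t) (slice H.U (t + 1)) := by
  rw [Finset.disjoint_left]
  intro x hx hx'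
  have := H.parity_eq C (mem_slice.1 hx) (mem_slice.1 hx')
  simp only at this
  omega

lemma sum_slice_sdiff_succ_add_sum_slice_nonpos (H : HistoryGraph G j o T false)
    (C : G.Coloring (Fin 2)) (t : ℕ) :
    ∑ x ∈ slice (H.U \ H.Ustar) (t + 1), (edgeExpansion G + G.degree x + 2 - 2 * j) +
      ∑ x ∈ slice H.U t, (edgeExpansion G - G.degree x) ≤ 0 := by
  set A := slice H.U t
  set B := slice (H.U \ H.Ustar) (t + 1)
  have hAB : Disjoint A B :=
    (H.disjoint_slice_slice_succ C t).mono_right (slice_mono Finset.sdiff_subset _)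
  have hdeg : ∀ x ∈ B, (G.degree x : ℝ) + 1 ≤ (A.filter (G.Adj x)).card + j := fun x hx =>
    mod_cast H.degree_add_one_le (mem_slice.1 hx)
  have hiso := edgeExpansion_mul_card_add_le G hAB
  calc _ ≤ ∑ x ∈ B, (edgeExpansion G + 2 * (A.filter (G.Adj x)).card - G.degree x) +
        ∑ x ∈ A, (edgeExpansion G - G.degree x) := by
        refine add_le_add_left (Finset.sum_le_sum fun x hx => ?_) _
        linarith [hdeg x hx]
    _ = edgeExpansion G * (A.card + B.card) + 2 * ∑ x ∈ B, ((A.filter (G.Adj x)).card : ℝ) -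
        (∑ x ∈ A, (G.degree x : ℝ) + ∑ x ∈ B, (G.degree x : ℝ)) := by
        simp only [Finset.sum_add_distrib, Finset.sum_sub_distrib, Finset.sum_const,
          nsmul_eq_mul, ← Finset.mul_sum]
        ring
    _ ≤ 0 := by linarith

lemma sum_sdiff_add_sum_filter_lt_nonpos (H : HistoryGraph G j o T false)
    (C : G.Coloring (Fin 2)) (hj : ∀ x, j ≤ G.degree x) :
    ∑ u ∈ H.U \ H.Ustar, (edgeExpansion G + G.degree u.1 + 2 - 2 * j) +
      ∑ u ∈ H.U with u.2 < T, (edgeExpansion G - G.degree u.1) ≤ 0 := by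
  have hW : ∑ u ∈ H.U \ H.Ustar, (edgeExpansion G + G.degree u.1 + 2 - 2 * j) =
      ∑ t ∈ Finset.range T, ∑ x ∈ slice (H.U \ H.Ustar) (t + 1),
        (edgeExpansion G + G.degree x + 2 - 2 * j) := by
    have hshift := Finset.sum_Ico_add' (fun t => ∑ x ∈ slice (H.U \ H.Ustar) t,
      (edgeExpansion G + G.degree x + 2 - 2 * j)) 0 T 1
    rw [Finset.range_eq_Ico, hshift, sum_sum_slice, Finset.filter_true_of_mem]
    intro u hu
    simpa [Nat.lt_succ_iff] using ⟨H.one_le_snd hu (hj _), H.snd_le (Finset.mem_sdiff.1 hu).1⟩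
  have hU : ∑ u ∈ H.U with u.2 < T, (edgeExpansion G - G.degree u.1) =
      ∑ t ∈ Finset.range T, ∑ x ∈ slice H.U t, (edgeExpansion G - G.degree x) := by
    rw [sum_sum_slice]
    simp only [Finset.mem_range]
  rw [hW, hU, ← Finset.sum_add_distrib]
  exact Finset.sum_nonpos fun t _ => H.sum_slice_sdiff_succ_add_sum_slice_nonpos C t

end HistoryGraph

end Paper

open Paper in
theorem historyGraph_edge_expansion_inequality_CP_bipartite_general
    {V : Type*}
    (G : SimpleGraph V) [DecidableRel G.Adj] [∀ v, Fintype (G.neighborSet v)]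
    (hbip : G.Colorable 2)
    (Δ : ℕ) (hΔ : IsLUB (Set.range fun x => G.degree x) Δ)
    (δ : ℕ) (hδ : IsGLB (Set.range fun x => G.degree x) δ)
    (j : ℕ) (hjδ : j ≤ δ)
    (o : V) (T : ℕ) (H : HistoryGraph G j o T false) :
    2 * (edgeExpansion G - j + 1) * H.U.card + δ - edgeExpansion G ≤
      (edgeExpansion G + Δ - 2 * j + 2) * H.Ustar.card := by
  obtain ⟨C⟩ := hbip
  have hΔdeg (x : V) : (G.degree x : ℝ) ≤ Δ := by exact_mod_cast hΔ.1 ⟨x, rfl⟩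
  have hδdeg (x : V) : δ ≤ G.degree x := hδ.1 ⟨x, rfl⟩
  have hslices := H.sum_sdiff_add_sum_filter_lt_nonpos C fun x => hjδ.trans (hδdeg x)
  have hsdiff := Finset.sum_sdiff H.ustar_subset
    (f := fun u => edgeExpansion G + G.degree u.1 + 2 - 2 * j)
  have hsplit := Finset.sum_filter_add_sum_filter_not H.U (·.2 < T)
    fun u => edgeExpansion G - G.degree u.1
  have hroot : ∑ u ∈ H.U with ¬u.2 < T, (edgeExpansion G - G.degree u.1) ≤
      edgeExpansion G - G.degree o := by
    simpa using Finset.sum_le_sum_of_subset_of_nonpos' (s := {(o, T)})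
      (by simpa using H.root_mem) fun u _ _ => sub_nonpos.2 (edgeExpansion_le_degree G u.1)
  have hstar : ∑ u ∈ H.Ustar, (edgeExpansion G + G.degree u.1 + 2 - 2 * j) ≤
      H.Ustar.card * (edgeExpansion G + Δ + 2 - 2 * j) := by
    rw [← nsmul_eq_mul]
    exact Finset.sum_le_card_nsmul _ _ _ fun u _ => by linarith [hΔdeg u.1]
  have hU : ∑ u ∈ H.U, (edgeExpansion G + G.degree u.1 + 2 - 2 * j) +
      ∑ u ∈ H.U, (edgeExpansion G - G.degree u.1) =
        H.U.card * (2 * (edgeExpansion G - j + 1)) := by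
    rw [← Finset.sum_add_distrib, ← nsmul_eq_mul, ← Finset.sum_const]
    exact Finset.sum_congr rfl fun u _ => by ring
  have hδo : (δ : ℝ) ≤ G.degree o := by exact_mod_cast hδdeg o
  linarith

open Paper in
/-- the improved history-graph inequality (Lemma 4.5, ineq. (4.4)) for the
Consensus Process on a bipartite graph. -/
theorem historyGraph_edge_expansion_inequality_CP_bipartite
    {V : Type*} [Infinite V]
    (G : SimpleGraph V) [DecidableRel G.Adj] [∀ v, Fintype (G.neighborSet v)]
    (hconn : G.Connected) (hbip : G.Colorable 2)
    (Δ : ℕ) (hΔ : IsLUB (Set.range fun x => G.degree x) Δ)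
    (δ : ℕ) (hδ : IsGLB (Set.range fun x => G.degree x) δ)
    (j : ℕ) (hj1 : 1 ≤ j) (hjδ : j ≤ δ)
    (o : V) (T : ℕ) (H : HistoryGraph G j o T false) :
    2 * (edgeExpansion G - j + 1) * H.U.card + δ - edgeExpansion G ≤
      (edgeExpansion G + Δ - 2 * j + 2) * H.Ustar.card :=
  historyGraph_edge_expansion_inequality_CP_bipartite_general G hbip Δ hΔ δ hδ j hjδ o T H
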